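/- arXiv:2207.03045 — 5 statements merged into one kernel-verified Lean document; each statement's English description precedes it below -/
import Mathlib

section
/- Let m ≥ 17 be a real number. Then for all x ≥ √(m-1), the polynomial h(x) = x³ - x² - (m-3)x + (m-2) satisfies h(x) > 0. -/
/-! Since `x ≥ 1`, the polynomial is decreasing in `m`, and at `m = x² + 1` it equals `2x - 1`. -/

theorem cubic_pos_of_le_sq_add_one {m x : ℝ} (hx : 1 ≤ x) (hm : m ≤ x ^ 2 + 1) :
    0 < x ^ 3 - x ^ 2 - (m - 3) * x + (m - 2) := by
  have key : x ^ 3 - x ^ 2 - (m - 3) * x + (m - 2) = (2 * x - 1) + (x ^ 2 + 1 - m) * (x - 1) := by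
    ring
  rw [key]
  have : 0 ≤ (x ^ 2 + 1 - m) * (x - 1) := mul_nonneg (by linarith) (by linarith)
  linarith

/-- Key polynomial comparison in Lemma 3.1: for real `m ≥ 17` and all
`x ≥ √(m-1)`, the polynomial `h(x) = x³ - x² - (m-3)x + (m-2)` is positive. -/
theorem stmt_0 (m x : ℝ) (hm : 17 ≤ m) (hx : Real.sqrt (m - 1) ≤ x) :
    x ^ 3 - x ^ 2 - (m - 3) * x + (m - 2) > 0 := by
  have hx1 : 1 ≤ x :=
    calc (1 : ℝ) = Real.sqrt 1 := Real.sqrt_one.symm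
      _ ≤ Real.sqrt (m - 1) := Real.sqrt_le_sqrt (by linarith)
      _ ≤ x := hx
  have hmx : m - 1 ≤ x ^ 2 := (Real.sqrt_le_left (by linarith)).1 hx
  exact cubic_pos_of_le_sq_add_one hx1 (by linarith)
end

section
/- For real m ≥ 17, the largest real root of f₂(x) = x⁴ - m x² - 4x + 2m - 10 is strictly less than the largest real root of f(x) = x³ - x² - (m-1)x + m - 3, given that the largest root of f exceeds √(m-1). -/
/-!
A root `b > 4` of `f` makes `f₂(b)` positive, because
`(b - 1) f₂(b) = b³ - 3b² - 4b + 4 + (b² - 2) f(b)`. Since `b² > m - 1`, `f₂` is increasing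
on `[b, ∞)`, so it has no root there.
-/

/-- The cubic `f`. -/
def cubicFactor (m x : ℝ) : ℝ := x ^ 3 - x ^ 2 - (m - 1) * x + m - 3

/-- The quartic `f₂`. -/
def quarticFactor (m x : ℝ) : ℝ := x ^ 4 - m * x ^ 2 - 4 * x + 2 * m - 10

lemma quarticFactor_pos_of_cubicFactor_eq_zero {m b : ℝ} (hb : 4 < b)
    (hroot : cubicFactor m b = 0) : 0 < quarticFactor m b := by
  have hidentity : (b - 1) * quarticFactor m b =
      b ^ 3 - 3 * b ^ 2 - 4 * b + 4 + (b ^ 2 - 2) * cubicFactor m b := by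
    simp only [quarticFactor, cubicFactor]; ring
  have hcubic : 0 < b ^ 3 - 3 * b ^ 2 - 4 * b + 4 := by nlinarith
  rw [hroot, mul_zero, add_zero] at hidentity
  exact pos_of_mul_pos_right (hidentity ▸ hcubic) (by linarith)

lemma quarticFactor_monotoneOn {m b : ℝ} (hb : 1 ≤ b) (hm : m + 2 ≤ 2 * b ^ 2) :
    MonotoneOn (quarticFactor m) (Set.Ici b) := by
  intro x hx y hy hxy
  have hdiff : quarticFactor m y - quarticFactor m x =
      (y - x) * ((y + x) * (y ^ 2 + x ^ 2 - m) - 4) := by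
    simp only [quarticFactor]; ring
  have hx2 : b ^ 2 ≤ x ^ 2 := pow_le_pow_left₀ (by linarith) (Set.mem_Ici.mp hx) 2
  have hy2 : b ^ 2 ≤ y ^ 2 := pow_le_pow_left₀ (by linarith) (Set.mem_Ici.mp hy) 2
  have hfactor : 0 ≤ (y + x) * (y ^ 2 + x ^ 2 - m) - 4 := by
    have : (2 : ℝ) * 2 ≤ (y + x) * (y ^ 2 + x ^ 2 - m) :=
      mul_le_mul (by linarith [Set.mem_Ici.mp hx, Set.mem_Ici.mp hy]) (by linarith)
        (by norm_num) (by linarith [Set.mem_Ici.mp hx])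
    linarith
  nlinarith [mul_nonneg (sub_nonneg.mpr hxy) hfactor]

theorem stmt_2_general (m a b : ℝ) (hm : 17 ≤ m)
    (ha : a ^ 4 - m * a ^ 2 - 4 * a + 2 * m - 10 = 0)
    (hb : b ^ 3 - b ^ 2 - (m - 1) * b + m - 3 = 0)
    (hbgt : Real.sqrt (m - 1) < b) :
    a < b := by
  have hbpos : 0 < b := (Real.sqrt_nonneg _).trans_lt hbgt
  have hb2 : m - 1 < b ^ 2 := (Real.sqrt_lt' hbpos).mp hbgt
  have hb4 : 4 < b := by nlinarith
  have hfb : 0 < quarticFactor m b := quarticFactor_pos_of_cubicFactor_eq_zero hb4 hb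
  by_contra! hba
  have hfab : quarticFactor m b ≤ quarticFactor m a :=
    quarticFactor_monotoneOn (by linarith) (by linarith) (Set.mem_Ici.mpr le_rfl) hba hba
  exact (hfb.trans_le hfab).ne' ha

/-- For real `m ≥ 17`, the largest real root of `f₂(x) = x⁴ - m x² - 4x + 2m - 10`
is strictly less than the largest real root of `f(x) = x³ - x² - (m-1)x + m - 3`,
given that the largest root of `f` exceeds `√(m-1)`. -/
theorem stmt_2 (m a b : ℝ) (hm : 17 ≤ m)
    (ha : a ^ 4 - m * a ^ 2 - 4 * a + 2 * m - 10 = 0)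
    (hamax : ∀ y : ℝ, y ^ 4 - m * y ^ 2 - 4 * y + 2 * m - 10 = 0 → y ≤ a)
    (hb : b ^ 3 - b ^ 2 - (m - 1) * b + m - 3 = 0)
    (hbmax : ∀ y : ℝ, y ^ 3 - y ^ 2 - (m - 1) * y + m - 3 = 0 → y ≤ b)
    (hbgt : Real.sqrt (m - 1) < b) :
    a < b :=
  stmt_2_general m a b hm ha hb hbgt
end

section
/- Let m ≥ 22 and t ∈ {1, 2}. Then f₃((1+√(4m-7))/2) < 0, where f₃(x) = x⁴ - m x² - (m-t-1)x + (t/2)(m-t-1). Consequently the largest real root of f₃ is strictly greater than (1+√(4m-7))/2. -/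
/-!
The threshold `x₀ = (1 + √(4m - 7))/2` is the positive root of `x² = x + (m - 2)`. Reducing `f₃`
modulo this quadratic gives `f₃(x₀) = (t - 2) x₀ - (m - 2) + (t/2)(m - t - 1)`, which is
`-x₀ - (m - 2)/2` for `t = 1` and `-1` for `t = 2`. Since `f₃(m) ≥ 0`, the intermediate value
theorem gives a root in `(x₀, m]`, so the largest root exceeds `x₀`.
-/

open Real

/-- The quartic `f₃` of the paper. -/
noncomputable def quarticF3 (m t x : ℝ) : ℝ :=
  x ^ 4 - m * x ^ 2 - (m - t - 1) * x + (t / 2) * (m - t - 1)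

lemma quarticF3_eq_of_sq_eq {m t x : ℝ} (hx : x ^ 2 = x + (m - 2)) :
    quarticF3 m t x = (t - 2) * x - (m - 2) + t / 2 * (m - t - 1) := by
  unfold quarticF3
  linear_combination (x ^ 2 + x - 1) * hx

lemma sq_half_one_add_sqrt {m : ℝ} (hm : 7 / 4 ≤ m) :
    ((1 + √(4 * m - 7)) / 2) ^ 2 = (1 + √(4 * m - 7)) / 2 + (m - 2) := by
  have hs : √(4 * m - 7) ^ 2 = 4 * m - 7 := sq_sqrt (by linarith)
  linear_combination hs / 4

lemma quarticF3_threshold_neg {m t : ℝ} (hm : 7 / 4 ≤ m) (ht : t = 1 ∨ t = 2) :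
    quarticF3 m t ((1 + √(4 * m - 7)) / 2) < 0 := by
  rw [quarticF3_eq_of_sq_eq (sq_half_one_add_sqrt hm)]
  have hs : 0 ≤ √(4 * m - 7) := sqrt_nonneg _
  rcases ht with rfl | rfl <;> linarith

lemma quarticF3_self_nonneg {m t : ℝ} (hm : 2 ≤ m) (ht : t = 1 ∨ t = 2) :
    0 ≤ quarticF3 m t m := by
  unfold quarticF3
  have hm3 : m * m ≤ m ^ 3 * (m - 1) := by
    nlinarith [mul_nonneg (sq_nonneg m) (show 0 ≤ m * (m - 1) - 1 by nlinarith)]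
  rcases ht with rfl | rfl <;> nlinarith

lemma half_one_add_sqrt_le {m : ℝ} (hm : 7 / 4 ≤ m) : (1 + √(4 * m - 7)) / 2 ≤ m := by
  have : √(4 * m - 7) ≤ 2 * m - 1 :=
    sqrt_le_iff.mpr ⟨by linarith, by nlinarith⟩
  linarith

lemma lt_of_forall_root_le {f : ℝ → ℝ} (hf : Continuous f) {a b z : ℝ} (hab : a ≤ b)
    (ha : f a < 0) (hb : 0 ≤ f b) (hz : ∀ y, f y = 0 → y ≤ z) : a < z := by
  obtain ⟨y, ⟨hay, -⟩, hy⟩ := intermediate_value_Icc hab hf.continuousOn ⟨ha.le, hb⟩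
  have hya : a ≠ y := by
    rintro rfl
    exact ha.ne hy
  exact (lt_of_le_of_ne hay hya).trans_le (hz y hy)

/-- Lemma 4.2(ii): for `m ≥ 22` and `t ∈ {1,2}`, the polynomial
`f₃(x) = x⁴ - m x² - (m-t-1)x + (t/2)(m-t-1)` is negative at `x = (1+√(4m-7))/2`;
consequently its largest real root is strictly greater than `(1+√(4m-7))/2`. -/
theorem stmt_4 (m t : ℝ) (hm : 22 ≤ m) (ht : t = 1 ∨ t = 2) :
    (fun x : ℝ => x ^ 4 - m * x ^ 2 - (m - t - 1) * x + (t / 2) * (m - t - 1))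
        ((1 + Real.sqrt (4 * m - 7)) / 2) < 0 ∧
    ∀ z : ℝ,
      ((z ^ 4 - m * z ^ 2 - (m - t - 1) * z + (t / 2) * (m - t - 1) = 0) ∧
        (∀ y : ℝ, y ^ 4 - m * y ^ 2 - (m - t - 1) * y + (t / 2) * (m - t - 1) = 0 → y ≤ z)) →
      (1 + Real.sqrt (4 * m - 7)) / 2 < z := by
  have hm' : 7 / 4 ≤ m := by linarith
  have hneg := quarticF3_threshold_neg hm' ht
  refine ⟨hneg, fun z ⟨_, hz⟩ => ?_⟩
  have hcont : Continuous (quarticF3 m t) := by unfold quarticF3; fun_prop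
  exact lt_of_forall_root_le hcont (half_one_add_sqrt_le hm') hneg
    (quarticF3_self_nonneg (by linarith) ht) hz
end

section
/- Let G be a graph and v a vertex with degree d ≥ 1. Then ρ(G) ≤ √(ρ(G - v)² + 2d - 1), where ρ denotes the adjacency spectral radius. -/
open Matrix

/-- The real adjacency matrix of a simple graph. -/
noncomputable def adjMat {V : Type*} [Fintype V] (G : SimpleGraph V) : Matrix V V ℝ :=
  Matrix.of fun i j =>
    haveI := Classical.propDecidable (G.Adj i j)
    if G.Adj i j then (1 : ℝ) else 0

/-- The adjacency spectral radius of a finite simple graph, as the supremum of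
the Rayleigh quotient of its (symmetric) adjacency matrix. -/
noncomputable def specRad {V : Type*} [Fintype V] (G : SimpleGraph V) : ℝ :=
  ⨆ x : {x : V → ℝ // x ≠ 0}, (x.1 ⬝ᵥ (adjMat G *ᵥ x.1)) / (x.1 ⬝ᵥ x.1)

/-!
Let `x ≥ 0` be a Perron vector of `A = A(G)`, `A x = ρ x`, and put `n = ‖x‖²`, `t = x_v²`,
`σ = ∑_{u ~ v} x_u²`. Three estimates hold:
* `ρ x_v = ∑_{u ~ v} x_u`, so Cauchy–Schwarz gives `ρ² t ≤ d σ`;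
* pairing `A x = ρ x` with the restriction of `x` to `N(v)` gives `ρ σ ≤ ρ (n - σ) + (d - 1) σ`;
* the restriction `y` of `x` to `G - v` satisfies `A(G - v) y = ρ y - x_v 𝟙_{N(v)}`, and a symmetric
  nonnegative matrix has operator norm equal to its spectral radius, so
  `ρ² (n - t) - 2 ρ² t + d t = ‖A(G - v) y‖² ≤ ρ(G - v)² (n - t)`.
Elementary algebra turns these into `ρ² ≤ ρ(G - v)² + 2d - 1`.
-/

open Finset WithLp

theorem Fintype.sum_subtype_ne_eq_sub {V M : Type*} [Fintype V] [DecidableEq V] [AddCommGroup M]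
    (f : V → M) (v : V) : ∑ u : ({u | u ≠ v} : Set V), f u = ∑ u, f u - f v := by
  rw [Fintype.sum_eq_add_sum_subtype_ne f v, add_sub_cancel_left]
  rfl

namespace Matrix

variable {W : Type*} [Fintype W]

noncomputable def rayleighSup (B : Matrix W W ℝ) : ℝ :=
  ⨆ x : {x : W → ℝ // x ≠ 0}, x.1 ⬝ᵥ (B *ᵥ x.1) / (x.1 ⬝ᵥ x.1)

theorem dotProduct_self_abs (x : W → ℝ) : |x| ⬝ᵥ |x| = x ⬝ᵥ x := by
  simp only [dotProduct, Pi.abs_apply, abs_mul_abs_self]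

theorem dotProduct_self_eq_norm_sq (x : W → ℝ) : x ⬝ᵥ x = ‖toLp 2 x‖ ^ 2 := by
  rw [← real_inner_self_eq_norm_sq, EuclideanSpace.inner_toLp_toLp, star_trivial]

theorem abs_dotProduct_mulVec_le {B : Matrix W W ℝ} (hB : ∀ i j, 0 ≤ B i j) (x : W → ℝ) :
    |x ⬝ᵥ (B *ᵥ x)| ≤ |x| ⬝ᵥ (B *ᵥ |x|) := by
  simp only [dotProduct, mulVec, Pi.abs_apply]
  refine (abs_sum_le_sum_abs _ _).trans (sum_le_sum fun i _ => ?_)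
  rw [abs_mul]
  gcongr
  refine (abs_sum_le_sum_abs _ _).trans (sum_le_sum fun j _ => ?_)
  rw [abs_mul, abs_of_nonneg (hB i j)]

section EuclideanSpace

variable [DecidableEq W] (B : Matrix W W ℝ)

theorem reApplyInnerSelf_toEuclideanCLM_toLp (x : W → ℝ) :
    (toEuclideanCLM (𝕜 := ℝ) B).reApplyInnerSelf (toLp 2 x) = x ⬝ᵥ (B *ᵥ x) := by
  rw [ContinuousLinearMap.reApplyInnerSelf_apply, toEuclideanCLM_toLp,
    EuclideanSpace.inner_toLp_toLp, star_trivial, RCLike.re_to_real]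

theorem rayleighQuotient_toEuclideanCLM_toLp (x : W → ℝ) :
    (toEuclideanCLM (𝕜 := ℝ) B).rayleighQuotient (toLp 2 x) = x ⬝ᵥ (B *ᵥ x) / (x ⬝ᵥ x) := by
  rw [ContinuousLinearMap.rayleighQuotient, reApplyInnerSelf_toEuclideanCLM_toLp,
    dotProduct_self_eq_norm_sq]

theorem rayleighSup_eq_iSup_rayleighQuotient :
    rayleighSup B = ⨆ x : {x : EuclideanSpace ℝ W // x ≠ 0},
      (toEuclideanCLM (𝕜 := ℝ) B).rayleighQuotient x := by
  let e : {x : W → ℝ // x ≠ 0} ≃ {x : EuclideanSpace ℝ W // x ≠ 0} :=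
    (WithLp.equiv 2 (W → ℝ)).symm.subtypeEquiv fun x => by simp
  rw [← e.iSup_comp]
  simp [e, rayleighSup, rayleighQuotient_toEuclideanCLM_toLp]

end EuclideanSpace

theorem bddAbove_rayleigh (B : Matrix W W ℝ) :
    BddAbove (Set.range fun x : {x : W → ℝ // x ≠ 0} => x.1 ⬝ᵥ (B *ᵥ x.1) / (x.1 ⬝ᵥ x.1)) := by
  classical
  refine ⟨‖toEuclideanCLM (𝕜 := ℝ) B‖, ?_⟩
  rintro _ ⟨x, rfl⟩
  dsimp only
  rw [← rayleighQuotient_toEuclideanCLM_toLp]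
  exact (le_abs_self _).trans (ContinuousLinearMap.rayleighQuotient_le_norm _ _)

theorem dotProduct_mulVec_le_rayleighSup (B : Matrix W W ℝ) (x : W → ℝ) :
    x ⬝ᵥ (B *ᵥ x) ≤ rayleighSup B * (x ⬝ᵥ x) := by
  rcases eq_or_ne x 0 with rfl | hx
  · simp
  have hpos : 0 < x ⬝ᵥ x := dotProduct_self_star_pos_iff.2 hx
  rw [← div_le_iff₀ hpos]
  exact le_ciSup (bddAbove_rayleigh B) ⟨x, hx⟩

variable {B : Matrix W W ℝ}

theorem abs_dotProduct_mulVec_le_rayleighSup (hB : ∀ i j, 0 ≤ B i j) (x : W → ℝ) :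
    |x ⬝ᵥ (B *ᵥ x)| ≤ rayleighSup B * (x ⬝ᵥ x) := by
  simpa only [dotProduct_self_abs] using
    (abs_dotProduct_mulVec_le hB x).trans (dotProduct_mulVec_le_rayleighSup B |x|)

theorem norm_toEuclideanCLM_le_abs_rayleighSup [DecidableEq W] (hs : B.IsHermitian)
    (hB : ∀ i j, 0 ≤ B i j) : ‖toEuclideanCLM (𝕜 := ℝ) B‖ ≤ |rayleighSup B| := by
  have hT : (toEuclideanCLM (𝕜 := ℝ) B : EuclideanSpace ℝ W →ₗ[ℝ] _).IsSymmetric :=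
    isSymmetric_toEuclideanLin_iff.2 hs
  rw [ContinuousLinearMap.norm_eq_iSup_rayleighQuotient _ hT]
  refine ciSup_le fun x => ?_
  rcases eq_or_ne x 0 with rfl | hx
  · simp
  have hpos : 0 < ofLp x ⬝ᵥ ofLp x := dotProduct_self_star_pos_iff.2 (by simpa using hx)
  rw [← toLp_ofLp 2 x, rayleighQuotient_toEuclideanCLM_toLp, abs_div, abs_of_pos hpos,
    div_le_iff₀ hpos]
  exact (abs_dotProduct_mulVec_le_rayleighSup hB _).trans (by gcongr; exact le_abs_self _)

theorem mulVec_dotProduct_mulVec_le (hs : B.IsHermitian) (hB : ∀ i j, 0 ≤ B i j) (y : W → ℝ) :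
    (B *ᵥ y) ⬝ᵥ (B *ᵥ y) ≤ rayleighSup B ^ 2 * (y ⬝ᵥ y) := by
  classical
  rw [dotProduct_self_eq_norm_sq, dotProduct_self_eq_norm_sq, ← sq_abs (rayleighSup B), ← mul_pow,
    ← toEuclideanCLM_toLp (𝕜 := ℝ)]
  gcongr
  exact (ContinuousLinearMap.le_opNorm _ _).trans
    (by gcongr; exact norm_toEuclideanCLM_le_abs_rayleighSup hs hB)

/-- Replacing a top eigenvector `u` by `|u|` does not decrease the Rayleigh quotient, so `|u|` is
a maximiser and hence again an eigenvector. -/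
theorem exists_nonneg_eigenvector [Nonempty W] (hs : B.IsHermitian) (hB : ∀ i j, 0 ≤ B i j) :
    ∃ x : W → ℝ, 0 ≤ x ∧ x ≠ 0 ∧ B *ᵥ x = rayleighSup B • x := by
  classical
  set T := toEuclideanCLM (𝕜 := ℝ) B
  have hT : (T : EuclideanSpace ℝ W →ₗ[ℝ] _).IsSymmetric := isSymmetric_toEuclideanLin_iff.2 hs
  obtain ⟨u, hu⟩ := hT.hasEigenvalue_iSup_of_finiteDimensional.exists_hasEigenvector
  have hBu : B *ᵥ ofLp u = rayleighSup B • ofLp u := by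
    have hTu : T u = rayleighSup B • u := by
      rw [rayleighSup_eq_iSup_rayleighQuotient]; exact hu.apply_eq_smul
    simpa [T] using congrArg ofLp hTu
  set w : W → ℝ := |ofLp u|
  have hw : ‖toLp 2 w‖ = ‖u‖ := by
    rw [← sq_eq_sq₀ (norm_nonneg _) (norm_nonneg _), ← dotProduct_self_eq_norm_sq,
      dotProduct_self_abs, ← toLp_ofLp 2 u, ← dotProduct_self_eq_norm_sq, ofLp_toLp]
  have hmax : IsMaxOn T.reApplyInnerSelf (Metric.sphere 0 ‖toLp 2 w‖) (toLp 2 w) := by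
    refine fun z hz => ?_
    show T.reApplyInnerSelf z ≤ T.reApplyInnerSelf (toLp 2 w)
    rw [← toLp_ofLp 2 z, reApplyInnerSelf_toEuclideanCLM_toLp,
      reApplyInnerSelf_toEuclideanCLM_toLp]
    calc ofLp z ⬝ᵥ (B *ᵥ ofLp z) ≤ rayleighSup B * (ofLp z ⬝ᵥ ofLp z) :=
          dotProduct_mulVec_le_rayleighSup B _
      _ = ofLp u ⬝ᵥ (B *ᵥ ofLp u) := by
          rw [hBu, dotProduct_smul, smul_eq_mul, dotProduct_self_eq_norm_sq,
            dotProduct_self_eq_norm_sq, toLp_ofLp, toLp_ofLp, mem_sphere_zero_iff_norm.1 hz, hw]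
      _ ≤ w ⬝ᵥ (B *ᵥ w) := (le_abs_self _).trans (abs_dotProduct_mulVec_le hB _)
  have hw0 : toLp 2 w ≠ 0 := by
    rw [← norm_ne_zero_iff, hw, norm_ne_zero_iff]; exact hu.2
  have hTw := ((ContinuousLinearMap.isSelfAdjoint_iff_isSymmetric.2 hT).hasEigenvector_of_isMaxOn
    hw0 hmax).apply_eq_smul
  rw [← rayleighSup_eq_iSup_rayleighQuotient] at hTw
  refine ⟨w, fun i => abs_nonneg _, fun h => hw0 (by simp [h]), ?_⟩
  simpa [T] using congrArg ofLp hTw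

end Matrix

section AdjMat

variable {V : Type*} [Fintype V] (G : SimpleGraph V)

theorem adjMat_eq_adjMatrix [DecidableRel G.Adj] : adjMat G = G.adjMatrix ℝ := by
  ext i j
  simp [adjMat, SimpleGraph.adjMatrix_apply]

theorem adjMat_isHermitian : (adjMat G).IsHermitian := by
  ext i j
  simp only [adjMat, conjTranspose_apply, of_apply, star_trivial]
  classical
  exact if_congr (G.adj_comm j i) rfl rfl

theorem adjMat_nonneg (i j : V) : 0 ≤ adjMat G i j := by
  classical
  rw [adjMat_eq_adjMatrix, SimpleGraph.adjMatrix_apply]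
  split_ifs <;> norm_num

theorem adjMat_induce (s : Set V) [Fintype s] :
    adjMat (G.induce s) = (adjMat G).submatrix (↑) (↑) := by
  ext i j
  classical
  exact if_congr Iff.rfl rfl rfl

theorem specRad_eq_rayleighSup : specRad G = rayleighSup (adjMat G) := rfl

variable {G} in
theorem one_le_specRad {u w : V} (h : G.Adj u w) : 1 ≤ specRad G := by
  classical
  have hle := dotProduct_mulVec_le_rayleighSup (adjMat G) (Pi.single u 1 + Pi.single w 1)
  rw [specRad_eq_rayleighSup, adjMat_eq_adjMatrix]
  simpa [adjMat_eq_adjMatrix, mulVec_add, dotProduct_add, add_dotProduct, h, h.symm, h.ne,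
    h.ne'] using hle

end AdjMat

section PerronVector

open SimpleGraph

variable {V : Type*} [Fintype V] {G : SimpleGraph V} [DecidableRel G.Adj] {x : V → ℝ} {ρ : ℝ}

theorem sum_neighborFinset_eq_mul (hx : G.adjMatrix ℝ *ᵥ x = ρ • x) (u : V) :
    ∑ w ∈ G.neighborFinset u, x w = ρ * x u := by
  rw [← adjMatrix_mulVec_apply, hx, Pi.smul_apply, smul_eq_mul]

theorem sq_mul_sq_le_degree_mul (hx : G.adjMatrix ℝ *ᵥ x = ρ • x) (v : V) :
    ρ ^ 2 * x v ^ 2 ≤ G.degree v * ∑ u ∈ G.neighborFinset v, x u ^ 2 := by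
  rw [← mul_pow, ← sum_neighborFinset_eq_mul hx, ← card_neighborFinset_eq_degree]
  exact sq_sum_le_card_mul_sum_sq

variable [DecidableEq V]

theorem sq_add_sum_neighborFinset_sq_le (x : V → ℝ) (v : V) :
    x v ^ 2 + ∑ u ∈ G.neighborFinset v, x u ^ 2 ≤ x ⬝ᵥ x := by
  calc x v ^ 2 + ∑ u ∈ G.neighborFinset v, x u ^ 2
      = ∑ u ∈ insert v (G.neighborFinset v), x u ^ 2 :=
        (sum_insert (f := fun u => x u ^ 2) (notMem_neighborFinset_self G v)).symm
    _ ≤ ∑ u, x u ^ 2 := sum_le_sum_of_subset_of_nonneg (subset_univ _) fun u _ _ => sq_nonneg _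
    _ = x ⬝ᵥ x := by simp only [dotProduct, sq]

theorem dotProduct_adjMatrix_mulVec_le {z : V → ℝ} (hz : 0 ≤ z) :
    z ⬝ᵥ (G.adjMatrix ℝ *ᵥ z) ≤ (∑ u, z u) ^ 2 - z ⬝ᵥ z := by
  have hrhs : (∑ u, z u) ^ 2 - z ⬝ᵥ z = ∑ u, z u * ∑ w ∈ univ.erase u, z w := by
    simp only [sum_erase_eq_sub (mem_univ _), mul_sub, sum_sub_distrib, ← sum_mul, sq,
      dotProduct]
  rw [hrhs]
  refine sum_le_sum fun u _ => ?_
  rw [adjMatrix_mulVec_apply]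
  refine mul_le_mul_of_nonneg_left (sum_le_sum_of_subset_of_nonneg ?_ fun w _ _ => hz w) (hz u)
  intro w hw
  simp only [mem_erase, mem_univ, and_true]
  exact ((mem_neighborFinset _ _ _).1 hw).ne'

/-- Pair the eigen-equation with the restriction `z` of `x` to `N(v)`: inside `N(v)` the graph
is at most a clique, and outside it `A z ≤ A x = ρ x`. -/
theorem mul_sum_sq_neighborFinset_le (hx : G.adjMatrix ℝ *ᵥ x = ρ • x) (hx0 : 0 ≤ x) (v : V) :
    ρ * ∑ u ∈ G.neighborFinset v, x u ^ 2 ≤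
      ρ * (x ⬝ᵥ x - ∑ u ∈ G.neighborFinset v, x u ^ 2) +
        (G.degree v - 1) * ∑ u ∈ G.neighborFinset v, x u ^ 2 := by
  set A := G.adjMatrix ℝ
  set N := G.neighborFinset v
  set σ := ∑ u ∈ N, x u ^ 2
  set z : V → ℝ := fun u => if u ∈ N then x u else 0
  have hz0 : 0 ≤ z := fun u => by by_cases hu : u ∈ N <;> simp [z, hu]; exact hx0 u
  have hxz0 : 0 ≤ x - z := fun u => by by_cases hu : u ∈ N <;> simp [z, hu]; exact hx0 u
  have hzx : z ⬝ᵥ x = σ := by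
    simp only [dotProduct, z, ite_mul, zero_mul, sum_ite_mem, univ_inter, σ, sq]
  have hzz : z ⬝ᵥ z = σ := by
    simp only [dotProduct, z, ite_mul, zero_mul, mul_ite, mul_zero, sum_ite_mem, univ_inter,
      inter_self, σ, sq]
  have hsum : ∑ u, z u = ∑ u ∈ N, x u := by
    simp only [z, sum_ite_mem, univ_inter]
  have hsymm : ∀ a b : V → ℝ, a ⬝ᵥ (A *ᵥ b) = b ⬝ᵥ (A *ᵥ a) := fun a b => by
    rw [dotProduct_mulVec, ← mulVec_transpose, transpose_adjMatrix, dotProduct_comm]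
  have hinner : z ⬝ᵥ (A *ᵥ z) ≤ (G.degree v - 1) * σ := by
    have hcs := sq_sum_le_card_mul_sum_sq (s := N) (f := x)
    rw [card_neighborFinset_eq_degree] at hcs
    refine (dotProduct_adjMatrix_mulVec_le hz0).trans ?_
    rw [hsum, hzz]
    linarith
  have hcross : z ⬝ᵥ (A *ᵥ (x - z)) ≤ ρ * (x ⬝ᵥ x - σ) :=
    calc z ⬝ᵥ (A *ᵥ (x - z))
        ≤ z ⬝ᵥ (A *ᵥ (x - z)) + (x - z) ⬝ᵥ (A *ᵥ (x - z)) := by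
          refine le_add_of_nonneg_right (dotProduct_nonneg_of_nonneg hxz0 fun u => ?_)
          rw [adjMatrix_mulVec_apply]
          exact sum_nonneg fun w _ => hxz0 w
      _ = (x - z) ⬝ᵥ (A *ᵥ x) := by rw [← add_dotProduct, add_sub_cancel, hsymm]
      _ = ρ * (x ⬝ᵥ x - σ) := by
          rw [hx, dotProduct_smul, sub_dotProduct, hzx, smul_eq_mul]
  calc ρ * σ = z ⬝ᵥ (A *ᵥ z) + z ⬝ᵥ (A *ᵥ (x - z)) := by
        rw [← dotProduct_add, ← mulVec_add, add_sub_cancel, hx, dotProduct_smul, hzx,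
          smul_eq_mul]
    _ ≤ _ := by linarith

theorem le_sq_specRad_induce_mul (hx : G.adjMatrix ℝ *ᵥ x = ρ • x) (v : V) :
    ρ ^ 2 * (x ⬝ᵥ x - x v ^ 2) - 2 * ρ ^ 2 * x v ^ 2 + G.degree v * x v ^ 2 ≤
      specRad (G.induce {u | u ≠ v}) ^ 2 * (x ⬝ᵥ x - x v ^ 2) := by
  set A := G.adjMatrix ℝ
  set y : ({u | u ≠ v} : Set V) → ℝ := fun u => x u
  have hyy : y ⬝ᵥ y = x ⬝ᵥ x - x v ^ 2 := by
    simp only [dotProduct, y, Fintype.sum_subtype_ne_eq_sub (fun u => x u * x u), sq]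
  have hBy : ∀ u, (adjMat (G.induce {u | u ≠ v}) *ᵥ y) u = ρ * x u - A u v * x v := by
    intro u
    rw [adjMat_induce, adjMat_eq_adjMatrix]
    simp only [mulVec, dotProduct, submatrix_apply, y]
    rw [Fintype.sum_subtype_ne_eq_sub (fun w => A u w * x w)]
    exact congrArg (· - _) (congrFun hx u)
  have hByBy : (adjMat (G.induce {u | u ≠ v}) *ᵥ y) ⬝ᵥ (adjMat (G.induce {u | u ≠ v}) *ᵥ y) =
      ρ ^ 2 * (x ⬝ᵥ x - x v ^ 2) - 2 * ρ ^ 2 * x v ^ 2 + G.degree v * x v ^ 2 := by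
    have hsymm : ∀ u, A u v = A v u := fun u => G.isSymm_adjMatrix.apply v u
    have hcol : ∑ u, A u v * x u = ρ * x v := by
      simp_rw [hsymm]
      exact congrFun hx v
    have hdeg : ∑ u, A u v * A u v = G.degree v := by
      rw [← adjMatrix_mul_self_apply_self, mul_apply]
      exact sum_congr rfl fun u _ => congrArg (· * A u v) (hsymm u)
    have hexpand : ∑ u, (ρ * x u - A u v * x v) * (ρ * x u - A u v * x v) =
        ρ ^ 2 * (x ⬝ᵥ x) - 2 * ρ * x v * ∑ u, A u v * x u + x v ^ 2 * ∑ u, A u v * A u v := by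
      simp only [dotProduct, mul_sum, ← sum_sub_distrib, ← sum_add_distrib]
      exact sum_congr rfl fun u _ => by ring
    have hvv : A v v = 0 := by simp [A]
    rw [dotProduct]
    simp only [hBy]
    rw [Fintype.sum_subtype_ne_eq_sub
        (fun u => (ρ * x u - A u v * x v) * (ρ * x u - A u v * x v)),
      hexpand, hcol, hdeg, hvv]
    ring
  rw [← hByBy, ← hyy]
  exact mulVec_dotProduct_mulVec_le (adjMat_isHermitian _) (adjMat_nonneg _) y

end PerronVector

theorem sq_le_of_perron_estimates {ρ ρ' n t σ d : ℝ} (hρ : 0 < ρ) (hd : 1 ≤ d) (hn : 0 < n)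
    (ht : 0 ≤ t) (hσ : 0 ≤ σ) (htσ : t + σ ≤ n) (h2 : ρ ^ 2 * t ≤ d * σ)
    (h3 : ρ * σ ≤ ρ * (n - σ) + (d - 1) * σ)
    (h4 : ρ ^ 2 * (n - t) - 2 * ρ ^ 2 * t + d * t ≤ ρ' ^ 2 * (n - t)) :
    ρ ^ 2 ≤ ρ' ^ 2 + 2 * d - 1 := by
  have htn : t < n := by
    by_contra! hnt
    have hσ0 : σ = 0 := by linarith
    rw [hσ0, mul_zero] at h2
    have : 0 < ρ ^ 2 * t := mul_pos (by positivity) (by linarith)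
    linarith
  have key : 2 * ρ ^ 2 * t + (d - 1) * t ≤ (2 * d - 1) * n := by
    rcases le_or_gt ((d + 1) * σ) (d * n) with hc | hc
    · nlinarith
    · -- `σ` is large, so `h3` forces `ρ < d`, and `t ≤ n - σ` is small
      have hσn : n < 2 * σ := by nlinarith
      have hρd : ρ < d := by nlinarith
      have hρd2 : ρ ^ 2 * t ≤ d ^ 2 * t := by gcongr
      have htd : (d + 1) * t ≤ n := by nlinarith
      nlinarith [mul_le_mul_of_nonneg_left htd (by linarith : (0 : ℝ) ≤ 2 * d - 1)]
  have h5 : (ρ ^ 2 - ρ' ^ 2) * (n - t) ≤ (2 * d - 1) * (n - t) := by nlinarith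
  linarith [le_of_mul_le_mul_right h5 (sub_pos.2 htn)]

/-- Vertex-deletion bound (Lemma 2.6): if `v` has degree `d ≥ 1` in `G`, then
`ρ(G) ≤ √(ρ(G - v)² + 2d - 1)`. -/
theorem stmt_8 {V : Type*} [Fintype V] [DecidableEq V] (G : SimpleGraph V) (v : V) (d : ℕ)
    (hd : (G.neighborSet v).ncard = d) (hd1 : 1 ≤ d) :
    specRad G ≤ Real.sqrt ((specRad (G.induce {u : V | u ≠ v})) ^ 2 + 2 * d - 1) := by
  classical
  have hdeg : G.degree v = d := by
    rw [← hd, ← SimpleGraph.card_neighborFinset_eq_degree, ← Set.ncard_coe_finset,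
      SimpleGraph.coe_neighborFinset]
  obtain ⟨u, hu⟩ := G.degree_pos_iff_exists_adj v |>.1 (by omega)
  have : Nonempty V := ⟨v⟩
  obtain ⟨x, hx0, hx_ne, hx⟩ := exists_nonneg_eigenvector (adjMat_isHermitian G) (adjMat_nonneg G)
  rw [← specRad_eq_rayleighSup, adjMat_eq_adjMatrix] at hx
  refine (le_abs_self _).trans (Real.abs_le_sqrt ?_)
  have h := sq_le_of_perron_estimates (by linarith [one_le_specRad hu])
    (by rw [hdeg]; exact_mod_cast hd1)
    (dotProduct_self_star_pos_iff.2 hx_ne) (sq_nonneg (x v))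
    (sum_nonneg fun u _ => sq_nonneg (x u)) (sq_add_sum_neighborFinset_sq_le x v)
    (sq_mul_sq_le_degree_mul hx v) (mul_sum_sq_neighborFinset_le hx hx0 v)
    (le_sq_specRad_induce_mul hx v)
  rwa [hdeg] at h
end

section
/- Let G be a graph in which every vertex of the neighborhood N(u*) of a fixed vertex u* has at most r neighbors inside N(u*) (equivalently, G is K_{2,r+1}-free restricted appropriately). If u ∈ U₂' satisfies Σ_{w ∈ N_W(u)} d_W(w) ≤ r², d_U(u) ≤ r, d_{U}(w) ≤ r for all w ∈ N_W(u), and d_W(u) > r(ρ+2r)/(ρ-2r) where ρ > 2r, then (1/2) d_U(u) x_u + Σ_{w∈N_W(u)} x_w < (1/2) d_W(u) x_{u*}, where x is the Perron vector of G normalized so x_{u*} is maximal. -/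
/-!
For `w ∈ N_W(u)` the vertex `u*` is not a neighbour of `w`, so the eigenvalue equation splits
`ρ x_w` into the contributions of `N(w) ∩ U` and `N(w) ∩ W`, giving
`ρ x_w ≤ (r + d_W(w)) x_{u*}`. Summing over `N_W(u)` yields
`ρ Σ x_w ≤ (r d_W(u) + r²) x_{u*}`, and together with `d_U(u) x_u ≤ r x_{u*}` the claim reduces
to `r(ρ + 2r) < d_W(u)(ρ - 2r)`.
-/

open Matrix

open Set

theorem finsum_mem_le_finsum_mem {α M : Type*} [AddCommMonoid M] [PartialOrder M]
    [IsOrderedAddMonoid M] {s : Set α} {f g : α → M} (hs : s.Finite) (h : ∀ x ∈ s, f x ≤ g x) :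
    ∑ᶠ x ∈ s, f x ≤ ∑ᶠ x ∈ s, g x := by
  rw [finsum_mem_eq_finite_toFinset_sum _ hs, finsum_mem_eq_finite_toFinset_sum _ hs]
  exact Finset.sum_le_sum fun x hx => h x (hs.mem_toFinset.1 hx)

theorem finsum_mem_le_ncard_nsmul {α M : Type*} [AddCommMonoid M] [PartialOrder M]
    [IsOrderedAddMonoid M] {s : Set α} {f : α → M} {c : M} (hs : s.Finite)
    (h : ∀ x ∈ s, f x ≤ c) : ∑ᶠ x ∈ s, f x ≤ s.ncard • c := by
  rw [finsum_mem_eq_finite_toFinset_sum _ hs, ncard_eq_toFinset_card s hs]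
  exact Finset.sum_le_card_nsmul _ _ _ fun x hx => h x (hs.mem_toFinset.1 hx)

namespace SimpleGraph

variable {V : Type*} (G : SimpleGraph V)

theorem neighborSet_inter_compl_insert_of_not_adj {a b : V} (h : ¬ G.Adj a b) (s : Set V) :
    G.neighborSet a ∩ (insert b s)ᶜ = G.neighborSet a \ s := by
  ext v
  simp only [mem_inter_iff, mem_compl_iff, mem_insert_iff, mem_sdiff, mem_neighborSet, not_or]
  exact ⟨fun h' => ⟨h'.1, h'.2.2⟩, fun h' => ⟨h'.1, fun e => h (e ▸ h'.1), h'.2⟩⟩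

variable [Fintype V]

theorem adjMat_mulVec_apply (X : V → ℝ) (v : V) :
    (adjMat G *ᵥ X) v = ∑ᶠ w ∈ G.neighborSet v, X w := by
  classical
  rw [finsum_mem_eq_toFinset_sum]
  simp only [mulVec, dotProduct, adjMat, of_apply, ite_mul, one_mul, zero_mul,
    ← Finset.sum_filter]
  congr 1
  ext w
  simp

theorem mul_apply_le_of_not_adj {ρ : ℝ} {X : V → ℝ} (heig : adjMat G *ᵥ X = ρ • X)
    {a b : V} (hmax : ∀ v, X v ≤ X b) (hab : ¬ G.Adj a b) :
    ρ * X a ≤ ((G.neighborSet a ∩ G.neighborSet b).ncard +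
      (G.neighborSet a ∩ (insert b (G.neighborSet b))ᶜ).ncard) * X b := by
  rw [← smul_eq_mul, ← Pi.smul_apply, ← heig, adjMat_mulVec_apply,
    ← finsum_mem_inter_add_sdiff (G.neighborSet b) (toFinite _),
    G.neighborSet_inter_compl_insert_of_not_adj hab, add_mul]
  gcongr <;> rw [← nsmul_eq_mul] <;> exact finsum_mem_le_ncard_nsmul (toFinite _) fun v _ => hmax v

end SimpleGraph

theorem stmt_14_general {V : Type*} [Fintype V] (G : SimpleGraph V)
    (ρ : ℝ) (X : V → ℝ) (heig : adjMat G *ᵥ X = ρ • X)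
    (ustar u : V) (hmax : ∀ v, X v ≤ X ustar)
    (hpos : 0 < X ustar) (r : ℝ) (hρ : 2 * r < ρ)
    (h1 : (∑ᶠ w ∈ G.neighborSet u ∩ (insert ustar (G.neighborSet ustar))ᶜ,
        ((G.neighborSet w ∩ (insert ustar (G.neighborSet ustar))ᶜ).ncard : ℝ)) ≤ r ^ 2)
    (h2 : ((G.neighborSet u ∩ G.neighborSet ustar).ncard : ℝ) ≤ r)
    (h3 : ∀ w ∈ G.neighborSet u ∩ (insert ustar (G.neighborSet ustar))ᶜ,
        ((G.neighborSet w ∩ G.neighborSet ustar).ncard : ℝ) ≤ r)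
    (h4 : ((G.neighborSet u ∩ (insert ustar (G.neighborSet ustar))ᶜ).ncard : ℝ) >
        r * (ρ + 2 * r) / (ρ - 2 * r)) :
    (1 / 2) * ((G.neighborSet u ∩ G.neighborSet ustar).ncard : ℝ) * X u +
      (∑ᶠ w ∈ G.neighborSet u ∩ (insert ustar (G.neighborSet ustar))ᶜ, X w) <
    (1 / 2) * ((G.neighborSet u ∩ (insert ustar (G.neighborSet ustar))ᶜ).ncard : ℝ) *
      X ustar := by
  set W := (insert ustar (G.neighborSet ustar))ᶜ
  set S := G.neighborSet u ∩ W
  have hr : 0 ≤ r := (Nat.cast_nonneg _).trans h2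
  have hρ0 : 0 < ρ := by linarith
  have hS : ρ * ∑ᶠ w ∈ S, X w ≤ (S.ncard * r + r ^ 2) * X ustar :=
    calc ρ * ∑ᶠ w ∈ S, X w = ∑ᶠ w ∈ S, ρ * X w := mul_finsum_mem _ _
      _ ≤ ∑ᶠ w ∈ S, (r + ((G.neighborSet w ∩ W).ncard : ℝ)) * X ustar := by
        refine finsum_mem_le_finsum_mem (toFinite _) fun w hw => ?_
        have hw' : ¬ G.Adj w ustar := fun h => hw.2 (mem_insert_of_mem _ h.symm)
        refine (G.mul_apply_le_of_not_adj heig hmax hw').trans ?_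
        gcongr
        exact h3 w hw
      _ = ((∑ᶠ _ ∈ S, r) + ∑ᶠ w ∈ S, ((G.neighborSet w ∩ W).ncard : ℝ)) * X ustar := by
        rw [← finsum_mem_add_distrib (toFinite _), finsum_mem_mul]
      _ ≤ (S.ncard * r + r ^ 2) * X ustar := by
        rw [← nsmul_eq_mul]
        gcongr
        exact finsum_mem_le_ncard_nsmul (toFinite _) fun _ _ => le_rfl
  have hu : ((G.neighborSet u ∩ G.neighborSet ustar).ncard : ℝ) * X u ≤ r * X ustar :=
    (mul_le_mul_of_nonneg_left (hmax u) (Nat.cast_nonneg _)).trans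
      (mul_le_mul_of_nonneg_right h2 hpos.le)
  have h4' : r * (ρ + 2 * r) < S.ncard * (ρ - 2 * r) := (div_lt_iff₀ (by linarith)).1 h4
  refine lt_of_mul_lt_mul_left ?_ hρ0.le
  linarith [mul_lt_mul_of_pos_right h4' hpos, mul_le_mul_of_nonneg_left hu hρ0.le]

/-- Claim 3 in the proof of Theorem 1.3. Here `U = N(u*)`, `W = V ∖ N[u*]`,
`d_S(v) = |N(v) ∩ S|`, and `X` is the Perron vector of `G` with maximum entry at
`u*`. If `u ∈ U` satisfies `Σ_{w∈N_W(u)} d_W(w) ≤ r²`, `d_U(u) ≤ r`,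
`d_U(w) ≤ r` for all `w ∈ N_W(u)`, and `d_W(u) > r(ρ+2r)/(ρ-2r)` where `ρ > 2r`,
then `(1/2) d_U(u) x_u + Σ_{w∈N_W(u)} x_w < (1/2) d_W(u) x_{u*}`. -/
theorem stmt_14 {V : Type*} [Fintype V] (G : SimpleGraph V)
    (ρ : ℝ) (X : V → ℝ) (heig : adjMat G *ᵥ X = ρ • X)
    (hnn : ∀ v, 0 ≤ X v) (ustar u : V) (hmax : ∀ v, X v ≤ X ustar)
    (hpos : 0 < X ustar) (r : ℝ) (hr : 2 ≤ r) (hρ : 2 * r < ρ)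
    (hu : u ∈ G.neighborSet ustar)
    (h1 : (∑ᶠ w ∈ G.neighborSet u ∩ (insert ustar (G.neighborSet ustar))ᶜ,
        ((G.neighborSet w ∩ (insert ustar (G.neighborSet ustar))ᶜ).ncard : ℝ)) ≤ r ^ 2)
    (h2 : ((G.neighborSet u ∩ G.neighborSet ustar).ncard : ℝ) ≤ r)
    (h3 : ∀ w ∈ G.neighborSet u ∩ (insert ustar (G.neighborSet ustar))ᶜ,
        ((G.neighborSet w ∩ G.neighborSet ustar).ncard : ℝ) ≤ r)
    (h4 : ((G.neighborSet u ∩ (insert ustar (G.neighborSet ustar))ᶜ).ncard : ℝ) >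
        r * (ρ + 2 * r) / (ρ - 2 * r)) :
    (1 / 2) * ((G.neighborSet u ∩ G.neighborSet ustar).ncard : ℝ) * X u +
      (∑ᶠ w ∈ G.neighborSet u ∩ (insert ustar (G.neighborSet ustar))ᶜ, X w) <
    (1 / 2) * ((G.neighborSet u ∩ (insert ustar (G.neighborSet ustar))ᶜ).ncard : ℝ) *
      X ustar :=
  stmt_14_general G ρ X heig ustar u hmax hpos r hρ h1 h2 h3 h4
end
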